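/- arXiv:2211.10385 — 2 statements merged into one kernel-verified Lean document; each statement's English description precedes it below -/
import Mathlib

section
/- Fix integers n ≥ k ≥ 4, let N = R_{k-1}((n-k+4)/2) - 1, and let φ : [N]^{(k-1)} → {0,1} be a 2-coloring with no monochromatic set of size (n-k+4)/2. Define ψ : [2^N]^{(k)} → {0,1} on X = {x_1 < ... < x_k} with δ_i = δ(x_i, x_{i+1}) by: ψ(X) = 0 if δ_{k-3} > δ_{k-2} < δ_{k-1}; ψ(X) = 1 if δ_{k-3} < δ_{k-2} > δ_{k-1}; otherwise ψ(X) = φ({δ_1,...,δ_{k-1}}) if |{δ_1,...,δ_{k-1}}| = k-1, and ψ(X) = 0 if |{δ_1,...,δ_{k-1}}| < k-1. Then ψ has no monochromatic subset of size n; consequently R_k(n) > 2^{R_{k-1}((n-k+4)/2) - 1}. -/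
open Finset

/-- Level of the greatest common ancestor of leaves `x y ∈ {1,…,2^N}` of the
complete binary tree of height `N` (root at level `1`, leaves at level `N+1`). -/
def treeDelta (N x y : ℕ) : ℕ := N + 1 - Nat.size ((x - 1) ^^^ (y - 1))



lemma testBit_msb {n : ℕ} (h : n ≠ 0) : n.testBit (Nat.size n - 1) = true := by
  have hs : 1 ≤ Nat.size n := Nat.size_pos.mpr (Nat.pos_of_ne_zero h)
  have h1 : 2 ^ (Nat.size n - 1) ≤ n := by
    by_contra hh
    push_neg at hh
    have := Nat.size_le.mpr hh
    omega
  have h2 : n < 2 ^ (Nat.size n - 1) * 2 := by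
    have := Nat.lt_size_self n
    calc n < 2 ^ Nat.size n := this
    _ = 2 ^ (Nat.size n - 1) * 2 := by rw [← pow_succ]; congr 1; omega
  have hdiv : n / 2 ^ (Nat.size n - 1) = 1 := by
    have lo : 1 ≤ n / 2 ^ (Nat.size n - 1) := (Nat.one_le_div_iff (Nat.pow_pos (by norm_num))).mpr h1
    have hi : n / 2 ^ (Nat.size n - 1) < 2 := (Nat.div_lt_iff_lt_mul (Nat.pow_pos (by norm_num))).mpr (by omega)
    omega
  rw [Nat.testBit_eq_decide_div_mod_eq, hdiv]
  decide

lemma testBit_false_of_size_le {n j : ℕ} (h : Nat.size n ≤ j) : n.testBit j = false :=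
  Nat.testBit_eq_false_of_lt (lt_of_lt_of_le (Nat.lt_size_self n) (Nat.pow_le_pow_right (by norm_num) h))

lemma two_pow_le_of_testBit {n j : ℕ} (h : n.testBit j = true) : 2 ^ j ≤ n := by
  by_contra hh
  push_neg at hh
  simp [Nat.testBit_eq_false_of_lt hh] at h

lemma msb_split {a b : ℕ} (h : a < b) :
    a.testBit (Nat.size (a ^^^ b) - 1) = false ∧ b.testBit (Nat.size (a ^^^ b) - 1) = true := by
  set i := Nat.size (a ^^^ b) - 1 with hi
  have hne : a ^^^ b ≠ 0 := by
    intro hh; exact absurd (Nat.xor_eq_zero_iff.mp hh) (Nat.ne_of_lt h)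
  have htop : (a ^^^ b).testBit i = true := testBit_msb hne
  have hdiff : (a.testBit i).xor (b.testBit i) = true := by
    rw [← Nat.testBit_xor]; exact htop
  have hhigh : ∀ j, j > i → a.testBit j = b.testBit j := by
    intro j hj
    have : (a ^^^ b).testBit j = false := by
      apply testBit_false_of_size_le
      have : 1 ≤ Nat.size (a ^^^ b) := Nat.size_pos.mpr (Nat.pos_of_ne_zero hne)
      omega
    rw [Nat.testBit_xor] at this
    revert this
    cases a.testBit j <;> cases b.testBit j <;> simp
  rcases Bool.eq_false_or_eq_true (a.testBit i) with ha | ha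
  case _ =>
    exfalso
    have hb : b.testBit i = false := by rw [ha] at hdiff; simpa using hdiff
    have : b < a := Nat.lt_of_testBit i hb ha (fun j hj => (hhigh j hj).symm)
    omega
  case _ =>
    refine ⟨ha, ?_⟩
    rw [ha] at hdiff; simpa using hdiff

lemma size_xor_ne {a b c : ℕ} (h1 : a < b) (h2 : b < c) :
    Nat.size (a ^^^ b) ≠ Nat.size (b ^^^ c) := by
  intro he
  have p1 := (msb_split h1).2
  have p2 := (msb_split h2).1
  rw [he] at p1
  rw [p1] at p2; exact Bool.noConfusion p2

lemma size_xor_aux {u v : ℕ} (hlt : Nat.size u < Nat.size v) :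
    Nat.size (u ^^^ v) = Nat.size v := by
  have hv : v ≠ 0 := by
    intro hh; subst hh; simp at hlt
  have hs : 1 ≤ Nat.size v := Nat.size_pos.mpr (Nat.pos_of_ne_zero hv)
  apply le_antisymm
  · rw [Nat.size_le]
    exact Nat.xor_lt_two_pow (lt_of_lt_of_le (Nat.lt_size_self u) (Nat.pow_le_pow_right (by norm_num) (by omega))) (Nat.lt_size_self v)
  · have hbit : (u ^^^ v).testBit (Nat.size v - 1) = true := by
      rw [Nat.testBit_xor, testBit_false_of_size_le (show Nat.size u ≤ Nat.size v - 1 by omega), testBit_msb hv]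
      rfl
    have := two_pow_le_of_testBit hbit
    have := Nat.lt_size.mpr this
    omega

lemma size_xor_max {u v : ℕ} (h : Nat.size u ≠ Nat.size v) :
    Nat.size (u ^^^ v) = max (Nat.size u) (Nat.size v) := by
  rcases Nat.lt_or_ge (Nat.size u) (Nat.size v) with hlt | hge
  · rw [size_xor_aux hlt]; omega
  · have hlt : Nat.size v < Nat.size u := by omega
    rw [Nat.xor_comm, size_xor_aux hlt]; omega

lemma size_le_N {N a : ℕ} (ha : a < 2 ^ N) : Nat.size a ≤ N := Nat.size_le.mpr ha

lemma treeDelta_min {N x y z : ℕ} (hx : 1 ≤ x) (h1 : x < y) (h2 : y < z) :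
    treeDelta N x z = min (treeDelta N x y) (treeDelta N y z) := by
  unfold treeDelta
  have hab : x - 1 < y - 1 := by omega
  have hbc : y - 1 < z - 1 := by omega
  have hxor : (x - 1) ^^^ (z - 1) = ((x - 1) ^^^ (y - 1)) ^^^ ((y - 1) ^^^ (z - 1)) := by
    rw [Nat.xor_assoc, ← Nat.xor_assoc (y-1), Nat.xor_self, Nat.zero_xor]
  rw [hxor, size_xor_max (size_xor_ne hab hbc)]
  omega

lemma treeDelta_ne {N x y z : ℕ} (hx : 1 ≤ x) (h1 : x < y) (h2 : y < z) (hz : z ≤ 2 ^ N) :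
    treeDelta N x y ≠ treeDelta N y z := by
  unfold treeDelta
  have hab : x - 1 < y - 1 := by omega
  have hbc : y - 1 < z - 1 := by omega
  have hne := size_xor_ne hab hbc
  have s1 : Nat.size ((x-1) ^^^ (y-1)) ≤ N :=
    size_le_N (Nat.xor_lt_two_pow (by omega) (by omega))
  have s2 : Nat.size ((y-1) ^^^ (z-1)) ≤ N :=
    size_le_N (Nat.xor_lt_two_pow (by omega) (by omega))
  omega

lemma treeDelta_bounds {N x y : ℕ} (hx : 1 ≤ x) (hxy : x < y) (hy : y ≤ 2 ^ N) :
    1 ≤ treeDelta N x y ∧ treeDelta N x y ≤ N := by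
  unfold treeDelta
  have hab : x - 1 < y - 1 := by omega
  have s1 : Nat.size ((x-1) ^^^ (y-1)) ≤ N :=
    size_le_N (Nat.xor_lt_two_pow (by omega) (by omega))
  have hpos : 1 ≤ Nat.size ((x-1) ^^^ (y-1)) :=
    Nat.size_pos.mpr (Nat.pos_of_ne_zero (by
      intro hh; exact absurd (Nat.xor_eq_zero_iff.mp hh) (Nat.ne_of_lt hab)))
  omega



/-- The list `δ_1, …, δ_{t-1}` of GCA-levels of consecutive elements of `C`. -/
def deltaList (N : ℕ) (C : Finset ℕ) : List ℕ :=
  List.zipWith (treeDelta N) (C.sort (· ≤ ·)) (C.sort (· ≤ ·)).tail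

/-- The coloring `c` is monochromatic on the `r`-subsets of `S`. -/
def IsMonoOn (c : Finset ℕ → Bool) (r : ℕ) (S : Finset ℕ) : Prop :=
  ∃ col : Bool, ∀ P ⊆ S, P.card = r → c P = col

/-- `R_r(m)`: the least `N` such that every 2-coloring of the `r`-subsets of
`{1,…,N}` admits a monochromatic set of size `m`. -/
noncomputable def ramseyNumber (r m : ℕ) : ℕ :=
  sInf {N : ℕ | ∀ c : Finset ℕ → Bool,
    ∃ S ⊆ Finset.Icc 1 N, S.card = m ∧ IsMonoOn c r S}

/-- The Erdős–Hajnal–Rado stepping-up coloring `ψ` of the `k`-subsets of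
`{1,…,2^N}` built from a coloring `φ` of the `(k-1)`-subsets of `{1,…,N}`:
with `δ_i = δ(x_i, x_{i+1})` (1-indexed), `ψ(X) = 0` if `δ_{k-3} > δ_{k-2} < δ_{k-1}`,
`ψ(X) = 1` if `δ_{k-3} < δ_{k-2} > δ_{k-1}`, otherwise `ψ(X) = φ({δ_1,…,δ_{k-1}})`
when `|{δ_1,…,δ_{k-1}}| = k-1`, and `ψ(X) = 0` when `|{δ_1,…,δ_{k-1}}| < k-1`.
(`false` plays the role of color `0` and `true` of color `1`.) -/
def stepUpColor (N k : ℕ) (φ : Finset ℕ → Bool) (X : Finset ℕ) : Bool :=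
  let D := deltaList N X
  if D.getD (k - 4) 0 > D.getD (k - 3) 0 ∧ D.getD (k - 3) 0 < D.getD (k - 2) 0 then
    false
  else if D.getD (k - 4) 0 < D.getD (k - 3) 0 ∧ D.getD (k - 3) 0 > D.getD (k - 2) 0 then
    true
  else if D.toFinset.card = k - 1 then φ D.toFinset
  else false



lemma sorted_map_range {g : ℕ → ℕ} {r : ℕ} (h : ∀ s t, s < t → t < r → g s < g t) :
    ((List.range r).map g).Pairwise (· < ·) := by
  rw [List.pairwise_map]
  apply List.Pairwise.imp_of_mem _ (List.pairwise_lt_range (n := r))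
  intro a b ha hb hab
  exact h a b hab (List.mem_range.mp hb)

lemma nodup_map_range {g : ℕ → ℕ} {r : ℕ} (h : ∀ s t, s < t → t < r → g s < g t) :
    ((List.range r).map g).Nodup :=
  (sorted_map_range h).nodup

lemma sort_map_range {g : ℕ → ℕ} {r : ℕ} (h : ∀ s t, s < t → t < r → g s < g t) :
    ((List.range r).map g).toFinset.sort (· ≤ ·) = (List.range r).map g :=
  (List.toFinset_sort (· ≤ ·) (nodup_map_range h)).mpr ((sorted_map_range h).imp le_of_lt)

lemma card_map_range {g : ℕ → ℕ} {r : ℕ} (h : ∀ s t, s < t → t < r → g s < g t) :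
    ((List.range r).map g).toFinset.card = r := by
  rw [List.toFinset_card_of_nodup (nodup_map_range h)]
  simp

lemma deltaList_map_range {N : ℕ} {g : ℕ → ℕ} {r : ℕ} (h : ∀ s t, s < t → t < r → g s < g t) :
    deltaList N ((List.range r).map g).toFinset =
      List.zipWith (treeDelta N) ((List.range r).map g) (((List.range r).map g).tail) := by
  unfold deltaList
  rw [sort_map_range h]

lemma getD_zipWith_tail {f : ℕ → ℕ → ℕ} {L : List ℕ} {t : ℕ} (h : t + 1 < L.length) :
    (List.zipWith f L L.tail).getD t 0 = f (L.getD t 0) (L.getD (t+1) 0) := by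
  have hlen : (List.zipWith f L L.tail).length = L.length - 1 := by
    rw [List.length_zipWith, List.length_tail]
    omega
  have ht : t < (List.zipWith f L L.tail).length := by omega
  rw [List.getD_eq_getElem _ _ ht, List.getD_eq_getElem _ _ (by omega : t < L.length),
    List.getD_eq_getElem _ _ h, List.getElem_zipWith]
  congr 1
  rw [List.getElem_tail]

lemma length_zipWith_tail {f : ℕ → ℕ → ℕ} {L : List ℕ} :
    (List.zipWith f L L.tail).length = L.length - 1 := by
  rw [List.length_zipWith, List.length_tail]
  omega

lemma getD_deltaList_map_range {N : ℕ} {g : ℕ → ℕ} {r t : ℕ}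
    (h : ∀ s t, s < t → t < r → g s < g t) (ht : t + 1 < r) :
    (deltaList N ((List.range r).map g).toFinset).getD t 0 = treeDelta N (g t) (g (t+1)) := by
  have hlen : ((List.range r).map g).length = r := by simp
  rw [deltaList_map_range h, getD_zipWith_tail (by rw [hlen]; exact ht)]
  have h1 : ((List.range r).map g).getD t 0 = g t := by
    rw [List.getD_eq_getElem _ _ (by rw [hlen]; omega)]
    simp
  have h2 : ((List.range r).map g).getD (t+1) 0 = g (t+1) := by
    rw [List.getD_eq_getElem _ _ (by rw [hlen]; omega)]
    simp
  rw [h1, h2]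

section Runs

variable {N n : ℕ} {y : ℕ → ℕ}

-- abbreviation for the consecutive delta
local notation "dd" => fun i => treeDelta N (y i) (y (i+1))

lemma adj_mono_le {g : ℕ → ℕ} {p q : ℕ} (h : ∀ j, p ≤ j → j < q → g j < g (j+1)) :
    ∀ j, p ≤ j → j ≤ q → g p ≤ g j := by
  intro j hpj hjq
  induction j with
  | zero =>
    have hp0 : p = 0 := by omega
    rw [hp0]
  | succ i ihi =>
    rcases Nat.lt_or_ge p (i+1) with hlt | hge
    · have h1 := h i (by omega) (by omega)
      have h2 := ihi (by omega) (by omega)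
      omega
    · have : p = i + 1 := by omega
      rw [this]

lemma treeDelta_le {N x y : ℕ} : treeDelta N x y ≤ N + 1 := by
  unfold treeDelta; omega

lemma treeDelta_run_incr {N n : ℕ} {y : ℕ → ℕ} (hmono : ∀ i j, i < j → j < n → y i < y j)
    (hlow : ∀ i, i < n → 1 ≤ y i) :
    ∀ m p, p + m + 1 < n → (∀ j, p ≤ j → j < p + m → treeDelta N (y j) (y (j+1)) < treeDelta N (y (j+1)) (y (j+2))) →
    treeDelta N (y p) (y (p + m + 1)) = treeDelta N (y p) (y (p+1)) := by
  intro m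
  induction m with
  | zero => intro p _ _; rfl
  | succ m ihm =>
    intro p hpn hrun
    have hsplit : treeDelta N (y p) (y (p + m + 2)) =
        min (treeDelta N (y p) (y (p + m + 1))) (treeDelta N (y (p + m + 1)) (y (p + m + 2))) := by
      apply treeDelta_min (hlow p (by omega)) (hmono p (p+m+1) (by omega) (by omega))
        (hmono (p+m+1) (p+m+2) (by omega) (by omega))
    have heq : p + (m + 1) + 1 = p + m + 2 := by omega
    rw [heq, hsplit, ihm p (by omega) (fun j h1 h2 => hrun j h1 (by omega))]
    have hle : treeDelta N (y p) (y (p+1)) ≤ treeDelta N (y (p+m+1)) (y (p+m+2)) := by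
      have h5 := adj_mono_le (g := fun i => treeDelta N (y i) (y (i+1))) (p := p) (q := p + m + 1)
        (fun j h1 h2 => hrun j h1 (by omega)) (p + m + 1) (by omega) le_rfl
      have he : p + m + 1 + 1 = p + m + 2 := by omega
      rwa [he] at h5
    exact min_eq_left hle

lemma treeDelta_run_decr {N n : ℕ} {y : ℕ → ℕ} (hmono : ∀ i j, i < j → j < n → y i < y j)
    (hlow : ∀ i, i < n → 1 ≤ y i) :
    ∀ m p, p + m + 1 < n → (∀ j, p ≤ j → j < p + m → treeDelta N (y (j+1)) (y (j+2)) < treeDelta N (y j) (y (j+1))) →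
    treeDelta N (y p) (y (p + m + 1)) = treeDelta N (y (p + m)) (y (p + m + 1)) := by
  intro m
  induction m with
  | zero => intro p _ _; rfl
  | succ m ihm =>
    intro p hpn hrun
    have hsplit : treeDelta N (y p) (y (p + m + 2)) =
        min (treeDelta N (y p) (y (p + 1))) (treeDelta N (y (p + 1)) (y (p + m + 2))) := by
      apply treeDelta_min (hlow p (by omega)) (hmono p (p+1) (by omega) (by omega))
        (hmono (p+1) (p+m+2) (by omega) (by omega))
    have heq : p + (m + 1) + 1 = p + m + 2 := by omega
    have heq6 : p + (m + 1) = p + m + 1 := by omega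
    have ih := ihm (p+1) (by omega) (fun j h1 h2 => hrun j (by omega) (by omega))
    have heq2 : p + 1 + m + 1 = p + m + 2 := by omega
    have heq3 : p + 1 + m = p + m + 1 := by omega
    rw [heq2, heq3] at ih
    rw [heq, heq6, hsplit, ih]
    have hle : treeDelta N (y (p+m+1)) (y (p+m+2)) ≤ treeDelta N (y p) (y (p+1)) := by
      have hanti : ∀ j, p ≤ j → j < p + m + 1 →
          (fun i => N + 1 - treeDelta N (y i) (y (i+1))) j < (fun i => N + 1 - treeDelta N (y i) (y (i+1))) (j+1) := by
        intro j h1 h2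
        have h3 := hrun j h1 (by omega)
        simp only
        have he : j + 1 + 1 = j + 2 := by omega
        rw [he]
        have b2 : treeDelta N (y j) (y (j+1)) ≤ N + 1 := treeDelta_le
        have b3 : treeDelta N (y (j+1)) (y (j+2)) ≤ N + 1 := treeDelta_le
        omega
      have h5 := adj_mono_le (g := fun i => N + 1 - treeDelta N (y i) (y (i+1))) (p := p) (q := p + m + 1)
        hanti (p + m + 1) (by omega) le_rfl
      have he : p + m + 1 + 1 = p + m + 2 := by omega
      rw [he] at h5
      have b2 : treeDelta N (y p) (y (p+1)) ≤ N + 1 := treeDelta_le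
      have b3 : treeDelta N (y (p+m+1)) (y (p+m+2)) ≤ N + 1 := treeDelta_le
      omega
    exact min_eq_right hle

end Runs

lemma adj_strict {g : ℕ → ℕ} {lo hi : ℕ} (h : ∀ j, lo ≤ j → j + 1 ≤ hi → g j < g (j+1)) :
    ∀ i j, lo ≤ i → i < j → j ≤ hi → g i < g j := by
  intro i j h1 h2 h3
  have hfirst : g i < g (i+1) := h i h1 (by omega)
  have hrest : g (i+1) ≤ g j :=
    adj_mono_le (p := i+1) (q := hi) (fun j' hj1 hj2 => h j' (by omega) (by omega)) j (by omega) h3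
  omega

lemma run_exists {R : ℕ → Prop} {lo hi m : ℕ} (hm : 2 ≤ m) (hlen : lo + 2 * m ≤ hi + 2)
    (hstep : ∀ j, lo ≤ j → j + 2 ≤ hi → R j → R (j+1)) :
    ∃ a, lo ≤ a ∧ a + m ≤ hi + 1 ∧
      ((∀ j, a ≤ j → j + 2 ≤ a + m → R j) ∨ (∀ j, a ≤ j → j + 2 ≤ a + m → ¬ R j)) := by
  by_cases h0 : R (lo + m - 1)
  · refine ⟨lo + m - 1, by omega, by omega, Or.inl ?_⟩
    have key : ∀ t, lo + m - 1 + t + 2 ≤ lo + 2*m - 1 → R (lo + m - 1 + t) := by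
      intro t
      induction t with
      | zero => intro _; simpa using h0
      | succ t iht =>
        intro ht
        have h1 := iht (by omega)
        have h2 := hstep (lo + m - 1 + t) (by omega) (by omega) h1
        have he : lo + m - 1 + t + 1 = lo + m - 1 + (t+1) := by omega
        rwa [he] at h2
    intro j hj1 hj2
    have h3 := key (j - (lo + m - 1)) (by omega)
    have he : lo + m - 1 + (j - (lo + m - 1)) = j := by omega
    rwa [he] at h3
  · refine ⟨lo, le_rfl, by omega, Or.inr ?_⟩
    have key : ∀ t, ∀ j, lo ≤ j → j + t ≤ lo + m - 1 → R j → R (j + t) := by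
      intro t
      induction t with
      | zero => intro j _ _ h; simpa using h
      | succ t iht =>
        intro j hj1 hj2 hRj
        have h1 : R (j+1) := hstep j hj1 (by omega) hRj
        have h2 := iht (j+1) (by omega) (by omega) h1
        have he : j + 1 + t = j + (t+1) := by omega
        rwa [he] at h2
    intro j hj1 hj2 hRj
    have h3 := key (lo + m - 1 - j) j hj1 (by omega) hRj
    have he : j + (lo + m - 1 - j) = lo + m - 1 := by omega
    rw [he] at h3
    exact h0 h3

lemma stepUpColor_eval {N k : ℕ} {φ : Finset ℕ → Bool} {X : Finset ℕ} {e1 e2 e3 : ℕ}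
    (h1 : (deltaList N X).getD (k-4) 0 = e1) (h2 : (deltaList N X).getD (k-3) 0 = e2)
    (h3 : (deltaList N X).getD (k-2) 0 = e3) :
    stepUpColor N k φ X = if e1 > e2 ∧ e2 < e3 then false
      else if e1 < e2 ∧ e2 > e3 then true
      else if (deltaList N X).toFinset.card = k - 1 then φ (deltaList N X).toFinset else false := by
  rw [stepUpColor, h1, h2, h3]

lemma toFinset_map' (l : List ℕ) (f : ℕ → ℕ) : (l.map f).toFinset = l.toFinset.image f := by
  ext x
  simp

lemma part1 (n k N : ℕ) (hk : 4 ≤ k) (hn : k ≤ n) (φ : Finset ℕ → Bool)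
    (hφ : ∀ S ⊆ Finset.Icc 1 N, S.card = (n - k + 4) / 2 → ¬ IsMonoOn φ (k - 1) S) :
    ∀ Y ⊆ Finset.Icc 1 (2 ^ N), Y.card = n → ¬ IsMonoOn (stepUpColor N k φ) k Y := by
  intro Y hY hYcard ⟨col, hcol⟩
  set m := (n - k + 4) / 2 with hm
  have hm2 : 2 ≤ m := by omega
  have hm3 : 2 * m ≤ n - k + 4 := by omega
  have hlen : (Y.sort (· ≤ ·)).length = n := by rw [Finset.length_sort, hYcard]
  set y : ℕ → ℕ := fun i => (Y.sort (· ≤ ·)).getD i 0 with hy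
  have hmem : ∀ i, i < n → y i ∈ Y := by
    intro i hi
    rw [hy]
    simp only
    rw [List.getD_eq_getElem _ _ (show i < (Y.sort (· ≤ ·)).length by rw [hlen]; omega)]
    rw [← Finset.mem_sort (α := ℕ) (· ≤ ·)]
    exact List.getElem_mem _
  have hmono : ∀ i j, i < j → j < n → y i < y j := by
    intro i j hij hj
    have hs := (Finset.sortedLT_sort Y).pairwise
    rw [hy]
    simp only
    rw [List.getD_eq_getElem _ _ (show i < (Y.sort (· ≤ ·)).length by rw [hlen]; omega),
        List.getD_eq_getElem _ _ (show j < (Y.sort (· ≤ ·)).length by rw [hlen]; omega)]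
    exact List.pairwise_iff_get.mp hs ⟨i, by rw [hlen]; omega⟩ ⟨j, by rw [hlen]; omega⟩ hij
  have hlow : ∀ i, i < n → 1 ≤ y i := by
    intro i hi
    have := hY (hmem i hi)
    rw [Finset.mem_Icc] at this
    omega
  have hhigh : ∀ i, i < n → y i ≤ 2 ^ N := by
    intro i hi
    have := hY (hmem i hi)
    rw [Finset.mem_Icc] at this
    omega
  set d : ℕ → ℕ := fun i => treeDelta N (y i) (y (i+1)) with hd
  have hne : ∀ j, j + 2 < n → d j ≠ d (j+1) := by
    intro j hj
    rw [hd]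
    simp only
    have he : j + 1 + 1 = j + 2 := by omega
    rw [he]
    exact treeDelta_ne (hlow j (by omega)) (hmono j (j+1) (by omega) (by omega))
      (hmono (j+1) (j+2) (by omega) (by omega)) (hhigh (j+2) (by omega))
  -- applying monochromaticity to constructed subsets
  have happ : ∀ g : ℕ → ℕ, (∀ s t, s < t → t < k → g s < g t) → (∀ t, t < k → g t < n) →
      stepUpColor N k φ (((List.range k).map (fun t => y (g t))).toFinset) = col := by
    intro g hg hgb
    apply hcol
    · intro x hx
      rw [List.mem_toFinset, List.mem_map] at hx
      obtain ⟨t, ht, rfl⟩ := hx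
      exact hmem (g t) (hgb t (List.mem_range.mp ht))
    · exact card_map_range (fun s t hst ht => hmono (g s) (g t) (hg s t hst ht) (hgb t ht))
  have hLM : ∀ j, k - 4 ≤ j → j + 3 < n → d j < d (j+1) → d (j+2) < d (j+1) → col = true := by
    intro j hj1 hj2 hA hB
    set g : ℕ → ℕ := fun t => if t < k - 4 then t else j + (t - (k - 4)) with hg
    have hgmono : ∀ s t, s < t → t < k → g s < g t := by
      intro s t hst ht
      rw [hg]; simp only
      by_cases hs4 : s < k - 4 <;> by_cases ht4 : t < k - 4 <;>
        simp only [if_pos, if_neg, hs4, ht4, if_true, if_false, ite_true, ite_false] <;> omega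
    have hgb : ∀ t, t < k → g t < n := by
      intro t ht; rw [hg]; simp only
      by_cases ht4 : t < k - 4 <;>
        simp only [if_pos, if_neg, ht4, ite_true, ite_false] <;> omega
    have hymono : ∀ s t, s < t → t < k → y (g s) < y (g t) :=
      fun s t hst ht => hmono (g s) (g t) (hgmono s t hst ht) (hgb t ht)
    have happ' := happ g hgmono hgb
    have v1 : g (k-4) = j := by rw [hg]; simp only [if_neg (show ¬(k-4 < k-4) by omega)]; omega
    have v2 : g (k-4+1) = j + 1 := by
      rw [hg]; simp only [if_neg (show ¬(k-4+1 < k-4) by omega)]; omega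
    have v3 : g (k-3) = j + 1 := by rw [hg]; simp only [if_neg (show ¬(k-3 < k-4) by omega)]; omega
    have v4 : g (k-3+1) = j + 2 := by
      rw [hg]; simp only [if_neg (show ¬(k-3+1 < k-4) by omega)]; omega
    have v5 : g (k-2) = j + 2 := by rw [hg]; simp only [if_neg (show ¬(k-2 < k-4) by omega)]; omega
    have v6 : g (k-2+1) = j + 3 := by
      rw [hg]; simp only [if_neg (show ¬(k-2+1 < k-4) by omega)]; omega
    have e1 : (deltaList N (((List.range k).map (fun t => y (g t))).toFinset)).getD (k-4) 0 = d j := by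
      have h5 := getD_deltaList_map_range (N := N) (g := fun t => y (g t)) (r := k) (t := k-4)
        hymono (by omega)
      rw [v1, v2] at h5
      exact h5
    have e2 : (deltaList N (((List.range k).map (fun t => y (g t))).toFinset)).getD (k-3) 0 = d (j+1) := by
      have h5 := getD_deltaList_map_range (N := N) (g := fun t => y (g t)) (r := k) (t := k-3)
        hymono (by omega)
      rw [v3, v4] at h5
      have he : j + 1 + 1 = j + 2 := by omega
      rw [← he] at h5
      exact h5
    have e3 : (deltaList N (((List.range k).map (fun t => y (g t))).toFinset)).getD (k-2) 0 = d (j+2) := by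
      have h5 := getD_deltaList_map_range (N := N) (g := fun t => y (g t)) (r := k) (t := k-2)
        hymono (by omega)
      rw [v5, v6] at h5
      have he : j + 2 + 1 = j + 3 := by omega
      rw [← he] at h5
      exact h5
    rw [stepUpColor_eval e1 e2 e3] at happ'
    rw [if_neg (by intro h; omega), if_pos ⟨hA, hB⟩] at happ'
    exact happ'.symm
  have hLm : ∀ j, k - 4 ≤ j → j + 3 < n → d (j+1) < d j → d (j+1) < d (j+2) → col = false := by
    intro j hj1 hj2 hA hB
    set g : ℕ → ℕ := fun t => if t < k - 4 then t else j + (t - (k - 4)) with hg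
    have hgmono : ∀ s t, s < t → t < k → g s < g t := by
      intro s t hst ht
      rw [hg]; simp only
      by_cases hs4 : s < k - 4 <;> by_cases ht4 : t < k - 4 <;>
        simp only [if_pos, if_neg, hs4, ht4, if_true, if_false, ite_true, ite_false] <;> omega
    have hgb : ∀ t, t < k → g t < n := by
      intro t ht; rw [hg]; simp only
      by_cases ht4 : t < k - 4 <;>
        simp only [if_pos, if_neg, ht4, ite_true, ite_false] <;> omega
    have hymono : ∀ s t, s < t → t < k → y (g s) < y (g t) :=
      fun s t hst ht => hmono (g s) (g t) (hgmono s t hst ht) (hgb t ht)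
    have happ' := happ g hgmono hgb
    have v1 : g (k-4) = j := by rw [hg]; simp only [if_neg (show ¬(k-4 < k-4) by omega)]; omega
    have v2 : g (k-4+1) = j + 1 := by
      rw [hg]; simp only [if_neg (show ¬(k-4+1 < k-4) by omega)]; omega
    have v3 : g (k-3) = j + 1 := by rw [hg]; simp only [if_neg (show ¬(k-3 < k-4) by omega)]; omega
    have v4 : g (k-3+1) = j + 2 := by
      rw [hg]; simp only [if_neg (show ¬(k-3+1 < k-4) by omega)]; omega
    have v5 : g (k-2) = j + 2 := by rw [hg]; simp only [if_neg (show ¬(k-2 < k-4) by omega)]; omega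
    have v6 : g (k-2+1) = j + 3 := by
      rw [hg]; simp only [if_neg (show ¬(k-2+1 < k-4) by omega)]; omega
    have e1 : (deltaList N (((List.range k).map (fun t => y (g t))).toFinset)).getD (k-4) 0 = d j := by
      have h5 := getD_deltaList_map_range (N := N) (g := fun t => y (g t)) (r := k) (t := k-4)
        hymono (by omega)
      rw [v1, v2] at h5
      exact h5
    have e2 : (deltaList N (((List.range k).map (fun t => y (g t))).toFinset)).getD (k-3) 0 = d (j+1) := by
      have h5 := getD_deltaList_map_range (N := N) (g := fun t => y (g t)) (r := k) (t := k-3)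
        hymono (by omega)
      rw [v3, v4] at h5
      have he : j + 1 + 1 = j + 2 := by omega
      rw [← he] at h5
      exact h5
    have e3 : (deltaList N (((List.range k).map (fun t => y (g t))).toFinset)).getD (k-2) 0 = d (j+2) := by
      have h5 := getD_deltaList_map_range (N := N) (g := fun t => y (g t)) (r := k) (t := k-2)
        hymono (by omega)
      rw [v5, v6] at h5
      have he : j + 2 + 1 = j + 3 := by omega
      rw [← he] at h5
      exact h5
    rw [stepUpColor_eval e1 e2 e3] at happ'
    rw [if_pos ⟨hA, hB⟩] at happ'
    exact happ'.symm
  have hrunex : ∃ a, k - 4 ≤ a ∧ a + m ≤ n - 1 ∧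
      ((∀ j, a ≤ j → j + 2 ≤ a + m → d j < d (j+1)) ∨
       (∀ j, a ≤ j → j + 2 ≤ a + m → d (j+1) < d j)) := by
    rcases Bool.eq_false_or_eq_true col with hct | hcf
    · -- col = true : no local min
      have hstep : ∀ j, k - 4 ≤ j → j + 2 ≤ n - 2 →
          (fun j => d (j+1) < d j) j → (fun j => d (j+1) < d j) (j+1) := by
        intro j h1 h2 hR
        have he : j + 1 + 1 = j + 2 := by omega
        rw [he]
        by_contra hcon
        push_neg at hcon
        have hne' := hne (j+1) (by omega)
        have he2 : j + 1 + 1 = j + 2 := by omega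
        rw [he2] at hne'
        have hB : d (j+1) < d (j+2) := by omega
        have := hLm j h1 (by omega) hR hB
        rw [hct] at this
        exact Bool.noConfusion this
      obtain ⟨a, ha1, ha2, hrun⟩ := run_exists (R := fun j => d (j+1) < d j) hm2
        (show k - 4 + 2 * m ≤ (n-2) + 2 by omega) hstep
      refine ⟨a, ha1, by omega, ?_⟩
      rcases hrun with hrun | hrun
      · exact Or.inr hrun
      · refine Or.inl (fun j hj1 hj2 => ?_)
        have h1 := hrun j hj1 hj2
        have hne' := hne j (by omega)
        omega
    · -- col = false : no local max among the relevant positions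
      have hstep : ∀ j, k - 4 ≤ j → j + 2 ≤ n - 2 →
          (fun j => d j < d (j+1)) j → (fun j => d j < d (j+1)) (j+1) := by
        intro j h1 h2 hR
        have he : j + 1 + 1 = j + 2 := by omega
        rw [he]
        by_contra hcon
        push_neg at hcon
        have hne' := hne (j+1) (by omega)
        have he2 : j + 1 + 1 = j + 2 := by omega
        rw [he2] at hne'
        have hB : d (j+2) < d (j+1) := by omega
        have := hLM j h1 (by omega) hR hB
        rw [hcf] at this
        exact Bool.noConfusion this
      obtain ⟨a, ha1, ha2, hrun⟩ := run_exists (R := fun j => d j < d (j+1)) hm2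
        (show k - 4 + 2 * m ≤ (n-2) + 2 by omega) hstep
      refine ⟨a, ha1, by omega, ?_⟩
      rcases hrun with hrun | hrun
      · exact Or.inl hrun
      · refine Or.inr (fun j hj1 hj2 => ?_)
        have h1 := hrun j hj1 hj2
        have hne' := hne j (by omega)
        omega
  obtain ⟨a, ha1, ha2, hrun⟩ := hrunex
  -- injectivity and the candidate set S
  have hSsub : Finset.image d (Finset.Icc a (a + m - 1)) ⊆ Finset.Icc 1 N := by
    intro x hx
    rw [Finset.mem_image] at hx
    obtain ⟨i, hi, rfl⟩ := hx
    rw [Finset.mem_Icc] at hi ⊢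
    exact treeDelta_bounds (hlow i (by omega)) (hmono i (i+1) (by omega) (by omega))
      (hhigh (i+1) (by omega))
  rcases hrun with hrun | hrun
  · -- increasing run
    have hstrict : ∀ i j, a ≤ i → i < j → j ≤ a + m - 1 → d i < d j :=
      adj_strict (fun j' h1 h2 => hrun j' h1 (by omega))
    have hinj : Set.InjOn d (Finset.Icc a (a + m - 1)) := by
      intro i hi j hj hij
      simp only [Finset.coe_Icc, Set.mem_Icc] at hi hj
      by_contra hij'
      rcases Nat.lt_or_ge i j with h | h
      · exact absurd hij (Nat.ne_of_lt (hstrict i j hi.1 h hj.2))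
      · exact absurd hij (Nat.ne_of_gt (hstrict j i hj.1 (by omega) hi.2))
    have hScard : (Finset.image d (Finset.Icc a (a + m - 1))).card = m := by
      rw [Finset.card_image_of_injOn hinj, Nat.card_Icc]
      omega
    refine hφ _ hSsub hScard ⟨col, ?_⟩
    intro P hP hPcard
    obtain ⟨I, hIsub, hIimg⟩ := Finset.subset_image_iff.mp hP
    have hIcard : I.card = k - 1 := by
      rw [← hPcard, ← hIimg]
      exact (Finset.card_image_of_injOn (hinj.mono (Finset.coe_subset.mpr hIsub))).symm
    have hIlen : (I.sort (· ≤ ·)).length = k - 1 := by rw [Finset.length_sort, hIcard]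
    set gI : ℕ → ℕ := fun t => (I.sort (· ≤ ·)).getD t 0 with hgI
    have hgImem : ∀ t, t < k - 1 → gI t ∈ I := by
      intro t ht
      rw [hgI]; simp only
      rw [List.getD_eq_getElem _ _ (show t < (I.sort (· ≤ ·)).length by rw [hIlen]; omega)]
      rw [← Finset.mem_sort (α := ℕ) (· ≤ ·)]
      exact List.getElem_mem _
    have hgIb : ∀ t, t < k - 1 → a ≤ gI t ∧ gI t ≤ a + m - 1 := by
      intro t ht
      have := hIsub (hgImem t ht)
      rwa [Finset.mem_Icc] at this
    have hgImono : ∀ s t, s < t → t < k - 1 → gI s < gI t := by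
      intro s t hst ht
      have hs := (Finset.sortedLT_sort I).pairwise
      rw [hgI]; simp only
      rw [List.getD_eq_getElem _ _ (show s < (I.sort (· ≤ ·)).length by rw [hIlen]; omega),
          List.getD_eq_getElem _ _ (show t < (I.sort (· ≤ ·)).length by rw [hIlen]; omega)]
      exact List.pairwise_iff_get.mp hs ⟨s, by rw [hIlen]; omega⟩ ⟨t, by rw [hIlen]; omega⟩ hst
    have hIlist : (List.range (k-1)).map gI = I.sort (· ≤ ·) := by
      apply List.ext_getElem (by rw [hIlen]; simp)
      intro t h1 h2
      rw [List.getElem_map, List.getElem_range]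
      rw [hgI]; simp only
      rw [List.getD_eq_getElem _ _ h2]
    set gg : ℕ → ℕ := fun t => if t < k - 1 then gI t else gI (k-2) + 1 with hgg
    have hggmono : ∀ s t, s < t → t < k → gg s < gg t := by
      intro s t hst ht
      rw [hgg]; simp only
      by_cases ht' : t < k - 1
      · rw [if_pos (show s < k-1 by omega), if_pos ht']
        exact hgImono s t hst ht'
      · rw [if_pos (show s < k-1 by omega), if_neg ht']
        rcases Nat.lt_or_ge s (k-2) with h | h
        · have := hgImono s (k-2) h (by omega)
          omega
        · have hs2 : s = k - 2 := by omega
          rw [hs2]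
          omega
    have hggb : ∀ t, t < k → gg t < n := by
      intro t ht
      rw [hgg]; simp only
      by_cases ht' : t < k - 1
      · rw [if_pos ht']
        have := hgIb t ht'
        omega
      · rw [if_neg ht']
        have := hgIb (k-2) (by omega)
        omega
    have hyggmono : ∀ s t, s < t → t < k → y (gg s) < y (gg t) :=
      fun s t hst ht => hmono (gg s) (gg t) (hggmono s t hst ht) (hggb t ht)
    have happ' := happ gg hggmono hggb
    have hDLlen : (deltaList N (((List.range k).map (fun t => y (gg t))).toFinset)).length = k - 1 := by
      rw [deltaList_map_range hyggmono, length_zipWith_tail]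
      simp
    have vK2 : gg (k-2) = gI (k-2) := by
      rw [hgg]; simp only [if_pos (show k-2 < k-1 by omega)]
    have vK1 : gg (k-1) = gI (k-2) + 1 := by
      rw [hgg]; simp only [if_neg (show ¬(k-1 < k-1) by omega)]
    have hentry : ∀ t, t + 1 < k → (deltaList N (((List.range k).map (fun t => y (gg t))).toFinset)).getD t 0 = d (gI t) := by
      intro t ht
      have h5 := getD_deltaList_map_range (N := N) (g := fun t => y (gg t)) (r := k) (t := t)
        hyggmono ht
      by_cases ht' : t + 1 < k - 1
      · have v1 : gg t = gI t := by rw [hgg]; simp only [if_pos (show t < k-1 by omega)]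
        have v2 : gg (t+1) = gI (t+1) := by rw [hgg]; simp only [if_pos ht']
        rw [v1, v2] at h5
        have hlt : gI t < gI (t+1) := hgImono t (t+1) (by omega) (by omega)
        have hb1 := hgIb t (by omega)
        have hb2 := hgIb (t+1) (by omega)
        have hrc : ∀ j, gI t ≤ j → j < gI t + (gI (t+1) - gI t - 1) →
            treeDelta N (y j) (y (j+1)) < treeDelta N (y (j+1)) (y (j+2)) := by
          intro j hj1 hj2
          have := hrun j (by omega) (by omega)
          exact this
        have h6 := treeDelta_run_incr hmono hlow (gI (t+1) - gI t - 1) (gI t)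
          (by omega) hrc
        have he : gI t + (gI (t+1) - gI t - 1) + 1 = gI (t+1) := by omega
        rw [he] at h6
        rw [h5, h6]
      · have ht2 : t = k - 2 := by omega
        rw [ht2] at h5 ⊢
        have he : k - 2 + 1 = k - 1 := by omega
        rw [he] at h5
        rw [vK2, vK1] at h5
        exact h5
    have hDL : deltaList N (((List.range k).map (fun t => y (gg t))).toFinset) =
        (List.range (k-1)).map (fun t => d (gI t)) := by
      apply List.ext_getElem (by rw [hDLlen]; simp)
      intro t h1 h2
      rw [List.getElem_map, List.getElem_range, ← List.getD_eq_getElem _ 0 h1]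
      exact hentry t (by rw [hDLlen] at h1; omega)
    have hToF : (deltaList N (((List.range k).map (fun t => y (gg t))).toFinset)).toFinset = P := by
      rw [hDL]
      have hcomp : (List.range (k-1)).map (fun t => d (gI t)) = ((List.range (k-1)).map gI).map d := by
        rw [List.map_map]
        rfl
      rw [hcomp, hIlist, toFinset_map', Finset.sort_toFinset, hIimg]
    have p1 := hentry (k-4) (by omega)
    have p2 := hentry (k-3) (by omega)
    have p3 := hentry (k-2) (by omega)
    have hi43 : gI (k-4) < gI (k-3) := hgImono (k-4) (k-3) (by omega) (by omega)
    have hi32 : gI (k-3) < gI (k-2) := hgImono (k-3) (k-2) (by omega) (by omega)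
    have c1 : d (gI (k-4)) < d (gI (k-3)) :=
      hstrict (gI (k-4)) (gI (k-3)) (hgIb (k-4) (by omega)).1 hi43 (hgIb (k-3) (by omega)).2
    have c2 : d (gI (k-3)) < d (gI (k-2)) :=
      hstrict (gI (k-3)) (gI (k-2)) (hgIb (k-3) (by omega)).1 hi32 (hgIb (k-2) (by omega)).2
    rw [stepUpColor_eval p1 p2 p3] at happ'
    rw [if_neg (by intro h; omega), if_neg (by intro h; omega), hToF, if_pos hPcard] at happ'
    exact happ'
  · -- decreasing run
    have hstrict : ∀ i j, a ≤ i → i < j → j ≤ a + m - 1 → d j < d i := by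
      intro i j h1 h2 h3
      have h4 := adj_strict (lo := a) (hi := a + m - 1) (g := fun i => N + 1 - d i)
        (fun j' hj1 hj2 => by
          have hb1 : d j' ≤ N + 1 := treeDelta_le
          have hb2 : d (j'+1) ≤ N + 1 := treeDelta_le
          have := hrun j' hj1 (by omega)
          omega) i j h1 h2 h3
      have hb1 : d i ≤ N + 1 := treeDelta_le
      have hb2 : d j ≤ N + 1 := treeDelta_le
      omega
    have hinj : Set.InjOn d (Finset.Icc a (a + m - 1)) := by
      intro i hi j hj hij
      simp only [Finset.coe_Icc, Set.mem_Icc] at hi hj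
      by_contra hij'
      rcases Nat.lt_or_ge i j with h | h
      · exact absurd hij (Nat.ne_of_gt (hstrict i j hi.1 h hj.2))
      · exact absurd hij (Nat.ne_of_lt (hstrict j i hj.1 (by omega) hi.2))
    have hScard : (Finset.image d (Finset.Icc a (a + m - 1))).card = m := by
      rw [Finset.card_image_of_injOn hinj, Nat.card_Icc]
      omega
    refine hφ _ hSsub hScard ⟨col, ?_⟩
    intro P hP hPcard
    obtain ⟨I, hIsub, hIimg⟩ := Finset.subset_image_iff.mp hP
    have hIcard : I.card = k - 1 := by
      rw [← hPcard, ← hIimg]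
      exact (Finset.card_image_of_injOn (hinj.mono (Finset.coe_subset.mpr hIsub))).symm
    have hIlen : (I.sort (· ≤ ·)).length = k - 1 := by rw [Finset.length_sort, hIcard]
    set gI : ℕ → ℕ := fun t => (I.sort (· ≤ ·)).getD t 0 with hgI
    have hgImem : ∀ t, t < k - 1 → gI t ∈ I := by
      intro t ht
      rw [hgI]; simp only
      rw [List.getD_eq_getElem _ _ (show t < (I.sort (· ≤ ·)).length by rw [hIlen]; omega)]
      rw [← Finset.mem_sort (α := ℕ) (· ≤ ·)]
      exact List.getElem_mem _
    have hgIb : ∀ t, t < k - 1 → a ≤ gI t ∧ gI t ≤ a + m - 1 := by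
      intro t ht
      have := hIsub (hgImem t ht)
      rwa [Finset.mem_Icc] at this
    have hgImono : ∀ s t, s < t → t < k - 1 → gI s < gI t := by
      intro s t hst ht
      have hs := (Finset.sortedLT_sort I).pairwise
      rw [hgI]; simp only
      rw [List.getD_eq_getElem _ _ (show s < (I.sort (· ≤ ·)).length by rw [hIlen]; omega),
          List.getD_eq_getElem _ _ (show t < (I.sort (· ≤ ·)).length by rw [hIlen]; omega)]
      exact List.pairwise_iff_get.mp hs ⟨s, by rw [hIlen]; omega⟩ ⟨t, by rw [hIlen]; omega⟩ hst
    have hIlist : (List.range (k-1)).map gI = I.sort (· ≤ ·) := by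
      apply List.ext_getElem (by rw [hIlen]; simp)
      intro t h1 h2
      rw [List.getElem_map, List.getElem_range]
      rw [hgI]; simp only
      rw [List.getD_eq_getElem _ _ h2]
    set gg : ℕ → ℕ := fun t => if t = 0 then gI 0 else gI (t-1) + 1 with hgg
    have hggmono : ∀ s t, s < t → t < k → gg s < gg t := by
      intro s t hst ht
      rw [hgg]; simp only
      by_cases hs0 : s = 0
      · rw [if_pos hs0, if_neg (show ¬(t = 0) by omega)]
        have h0 : gI 0 ≤ gI (t-1) := by
          rcases Nat.eq_zero_or_pos (t-1) with h | h
          · rw [h]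
          · exact (hgImono 0 (t-1) h (by omega)).le
        omega
      · rw [if_neg hs0, if_neg (show ¬(t = 0) by omega)]
        have := hgImono (s-1) (t-1) (by omega) (by omega)
        omega
    have hggb : ∀ t, t < k → gg t < n := by
      intro t ht
      rw [hgg]; simp only
      by_cases ht0 : t = 0
      · rw [if_pos ht0]
        have := hgIb 0 (by omega)
        omega
      · rw [if_neg ht0]
        have := hgIb (t-1) (by omega)
        omega
    have hyggmono : ∀ s t, s < t → t < k → y (gg s) < y (gg t) :=
      fun s t hst ht => hmono (gg s) (gg t) (hggmono s t hst ht) (hggb t ht)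
    have happ' := happ gg hggmono hggb
    have hDLlen : (deltaList N (((List.range k).map (fun t => y (gg t))).toFinset)).length = k - 1 := by
      rw [deltaList_map_range hyggmono, length_zipWith_tail]
      simp
    have hentry : ∀ t, t + 1 < k → (deltaList N (((List.range k).map (fun t => y (gg t))).toFinset)).getD t 0 = d (gI t) := by
      intro t ht
      have h5 := getD_deltaList_map_range (N := N) (g := fun t => y (gg t)) (r := k) (t := t)
        hyggmono ht
      by_cases ht0 : t = 0
      · rw [ht0] at h5 ⊢
        have v1 : gg 0 = gI 0 := by simp [hgg]
        have v2 : gg (0+1) = gI 0 + 1 := by simp [hgg]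
        rw [v1, v2] at h5
        exact h5
      · have v1 : gg t = gI (t-1) + 1 := by rw [hgg]; simp only [if_neg ht0]
        have v2 : gg (t+1) = gI t + 1 := by
          simp [hgg]
        rw [v1, v2] at h5
        have hlt : gI (t-1) < gI t := hgImono (t-1) t (by omega) (by omega)
        have hb1 := hgIb (t-1) (by omega)
        have hb2 := hgIb t (by omega)
        have hrc : ∀ j, gI (t-1) + 1 ≤ j → j < gI (t-1) + 1 + (gI t - gI (t-1) - 1) →
            treeDelta N (y (j+1)) (y (j+2)) < treeDelta N (y j) (y (j+1)) := by
          intro j hj1 hj2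
          have := hrun j (by omega) (by omega)
          exact this
        have h6 := treeDelta_run_decr hmono hlow (gI t - gI (t-1) - 1) (gI (t-1) + 1)
          (by omega) hrc
        have he : gI (t-1) + 1 + (gI t - gI (t-1) - 1) = gI t := by omega
        rw [he] at h6
        rw [h5, h6]
    have hDL : deltaList N (((List.range k).map (fun t => y (gg t))).toFinset) =
        (List.range (k-1)).map (fun t => d (gI t)) := by
      apply List.ext_getElem (by rw [hDLlen]; simp)
      intro t h1 h2
      rw [List.getElem_map, List.getElem_range, ← List.getD_eq_getElem _ 0 h1]
      exact hentry t (by rw [hDLlen] at h1; omega)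
    have hToF : (deltaList N (((List.range k).map (fun t => y (gg t))).toFinset)).toFinset = P := by
      rw [hDL]
      have hcomp : (List.range (k-1)).map (fun t => d (gI t)) = ((List.range (k-1)).map gI).map d := by
        rw [List.map_map]
        rfl
      rw [hcomp, hIlist, toFinset_map', Finset.sort_toFinset, hIimg]
    have p1 := hentry (k-4) (by omega)
    have p2 := hentry (k-3) (by omega)
    have p3 := hentry (k-2) (by omega)
    have hi43 : gI (k-4) < gI (k-3) := hgImono (k-4) (k-3) (by omega) (by omega)
    have hi32 : gI (k-3) < gI (k-2) := hgImono (k-3) (k-2) (by omega) (by omega)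
    have c1 : d (gI (k-3)) < d (gI (k-4)) :=
      hstrict (gI (k-4)) (gI (k-3)) (hgIb (k-4) (by omega)).1 hi43 (hgIb (k-3) (by omega)).2
    have c2 : d (gI (k-2)) < d (gI (k-3)) :=
      hstrict (gI (k-3)) (gI (k-2)) (hgIb (k-3) (by omega)).1 hi32 (hgIb (k-2) (by omega)).2
    rw [stepUpColor_eval p1 p2 p3] at happ'
    rw [if_neg (by intro h; omega), if_neg (by intro h; omega), hToF, if_pos hPcard] at happ'
    exact happ' 

lemma ramseyAux : ∀ r p q : ℕ, ∃ M : ℕ, ∀ (V : Finset ℕ) (c : Finset ℕ → Bool), M ≤ V.card →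
    ∃ T ⊆ V, (T.card = p ∧ ∀ P ⊆ T, P.card = r → c P = false) ∨
             (T.card = q ∧ ∀ P ⊆ T, P.card = r → c P = true) := by
  intro r
  induction r with
  | zero =>
    intro p q
    refine ⟨max p q, fun V c hV => ?_⟩
    rcases Bool.eq_false_or_eq_true (c ∅) with hc | hc
    · obtain ⟨T, hT, hTc⟩ := Finset.exists_subset_card_eq (show q ≤ V.card by omega)
      refine ⟨T, hT, Or.inr ⟨hTc, fun P _ hP => ?_⟩⟩
      rw [Finset.card_eq_zero.mp hP]; exact hc
    · obtain ⟨T, hT, hTc⟩ := Finset.exists_subset_card_eq (show p ≤ V.card by omega)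
      refine ⟨T, hT, Or.inl ⟨hTc, fun P _ hP => ?_⟩⟩
      rw [Finset.card_eq_zero.mp hP]; exact hc
  | succ r ih =>
    suffices H : ∀ s p q : ℕ, p + q ≤ s → ∃ M : ℕ, ∀ (V : Finset ℕ) (c : Finset ℕ → Bool), M ≤ V.card →
        ∃ T ⊆ V, (T.card = p ∧ ∀ P ⊆ T, P.card = r + 1 → c P = false) ∨
                 (T.card = q ∧ ∀ P ⊆ T, P.card = r + 1 → c P = true) by
      exact fun p q => H (p + q) p q le_rfl
    intro s
    induction s with
    | zero =>
      intro p q hpq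
      have hp : p = 0 := by omega
      refine ⟨0, fun V c _ => ⟨∅, Finset.empty_subset V, Or.inl ⟨by simp [hp], fun P hP hPc => ?_⟩⟩⟩
      have := Finset.card_le_card hP
      rw [Finset.card_empty] at this
      omega
    | succ s ihs =>
      intro p q hpq
      by_cases hp : p ≤ r
      · refine ⟨p, fun V c hV => ?_⟩
        obtain ⟨T, hT, hTc⟩ := Finset.exists_subset_card_eq hV
        refine ⟨T, hT, Or.inl ⟨hTc, fun P hP hPc => ?_⟩⟩
        have := Finset.card_le_card hP
        omega
      by_cases hq : q ≤ r
      · refine ⟨q, fun V c hV => ?_⟩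
        obtain ⟨T, hT, hTc⟩ := Finset.exists_subset_card_eq hV
        refine ⟨T, hT, Or.inr ⟨hTc, fun P hP hPc => ?_⟩⟩
        have := Finset.card_le_card hP
        omega
      obtain ⟨M1, hM1⟩ := ihs (p - 1) q (by omega)
      obtain ⟨M2, hM2⟩ := ihs p (q - 1) (by omega)
      obtain ⟨M0, hM0⟩ := ih M1 M2
      refine ⟨M0 + 1, fun V c hV => ?_⟩
      have hVne : V.Nonempty := Finset.card_pos.mp (by omega)
      obtain ⟨v, hv⟩ := hVne
      set V' := V.erase v with hV'
      have hV'card : M0 ≤ V'.card := by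
        rw [hV', Finset.card_erase_of_mem hv]; omega
      obtain ⟨T', hT'sub, hT'⟩ := hM0 V' (fun P => c (insert v P)) hV'card
      have hvT' : v ∉ T' := fun hh => Finset.notMem_erase v V (hT'sub hh)
      rcases hT' with ⟨hT'c, hmono⟩ | ⟨hT'c, hmono⟩
      · obtain ⟨T, hTsub, hT⟩ := hM1 T' c (le_of_eq hT'c.symm)
        rcases hT with ⟨hTc, hTm⟩ | ⟨hTc, hTm⟩
        · refine ⟨insert v T, ?_, Or.inl ⟨?_, ?_⟩⟩
          · intro x hx
            rcases Finset.mem_insert.mp hx with rfl | hx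
            · exact hv
            · exact Finset.erase_subset v V (hT'sub (hTsub hx))
          · rw [Finset.card_insert_of_notMem (fun hh => hvT' (hTsub hh)), hTc]; omega
          · intro P hP hPc
            by_cases hvP : v ∈ P
            · have hPe : P.erase v ⊆ T' := fun x hx =>
                hTsub (by
                  have := hP (Finset.mem_of_mem_erase hx)
                  rcases Finset.mem_insert.mp this with rfl | hh
                  · exact absurd (Finset.mem_erase.mp hx).1 (by simp)
                  · exact hh)
              have : c (insert v (P.erase v)) = false :=
                hmono (P.erase v) hPe (by rw [Finset.card_erase_of_mem hvP, hPc]; omega)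
              rwa [Finset.insert_erase hvP] at this
            · have hPT : P ⊆ T := fun x hx => by
                rcases Finset.mem_insert.mp (hP hx) with rfl | hh
                · exact absurd hx hvP
                · exact hh
              exact hTm P hPT hPc
        · exact ⟨T, fun x hx => Finset.erase_subset v V (hT'sub (hTsub hx)),
            Or.inr ⟨hTc, hTm⟩⟩
      · obtain ⟨T, hTsub, hT⟩ := hM2 T' c (le_of_eq hT'c.symm)
        rcases hT with ⟨hTc, hTm⟩ | ⟨hTc, hTm⟩
        · exact ⟨T, fun x hx => Finset.erase_subset v V (hT'sub (hTsub hx)),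
            Or.inl ⟨hTc, hTm⟩⟩
        · refine ⟨insert v T, ?_, Or.inr ⟨?_, ?_⟩⟩
          · intro x hx
            rcases Finset.mem_insert.mp hx with rfl | hx
            · exact hv
            · exact Finset.erase_subset v V (hT'sub (hTsub hx))
          · rw [Finset.card_insert_of_notMem (fun hh => hvT' (hTsub hh)), hTc]; omega
          · intro P hP hPc
            by_cases hvP : v ∈ P
            · have hPe : P.erase v ⊆ T' := fun x hx =>
                hTsub (by
                  have := hP (Finset.mem_of_mem_erase hx)
                  rcases Finset.mem_insert.mp this with rfl | hh
                  · exact absurd (Finset.mem_erase.mp hx).1 (by simp)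
                  · exact hh)
              have : c (insert v (P.erase v)) = true :=
                hmono (P.erase v) hPe (by rw [Finset.card_erase_of_mem hvP, hPc]; omega)
              rwa [Finset.insert_erase hvP] at this
            · have hPT : P ⊆ T := fun x hx => by
                rcases Finset.mem_insert.mp (hP hx) with rfl | hh
                · exact absurd hx hvP
                · exact hh
              exact hTm P hPT hPc

lemma ramsey_nonempty (r mm : ℕ) :
    {N : ℕ | ∀ c : Finset ℕ → Bool,
      ∃ S ⊆ Finset.Icc 1 N, S.card = mm ∧ IsMonoOn c r S}.Nonempty := by
  obtain ⟨M, hM⟩ := ramseyAux r mm mm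
  refine ⟨M, fun c => ?_⟩
  obtain ⟨T, hT, hcase⟩ := hM (Finset.Icc 1 M) c (by rw [Nat.card_Icc]; omega)
  rcases hcase with ⟨h1, h2⟩ | ⟨h1, h2⟩
  · exact ⟨T, hT, h1, false, h2⟩
  · exact ⟨T, hT, h1, true, h2⟩
/-- Stepping-up lemma of Erdős–Hajnal–Rado: for `n ≥ k ≥ 4` and
`N = R_{k-1}((n-k+4)/2) - 1`, if `φ` is a 2-coloring of the `(k-1)`-subsets of
`{1,…,N}` with no monochromatic set of size `(n-k+4)/2`, then the stepping-up
coloring `ψ` of the `k`-subsets of `{1,…,2^N}` has no monochromatic set of size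
`n`; consequently `R_k(n) > 2^{R_{k-1}((n-k+4)/2) - 1}`. -/
theorem stepping_up (n k N : ℕ) (hk : 4 ≤ k) (hn : k ≤ n)
    (hN : N = ramseyNumber (k - 1) ((n - k + 4) / 2) - 1)
    (φ : Finset ℕ → Bool)
    (hφ : ∀ S ⊆ Finset.Icc 1 N, S.card = (n - k + 4) / 2 → ¬ IsMonoOn φ (k - 1) S) :
    (∀ Y ⊆ Finset.Icc 1 (2 ^ N), Y.card = n → ¬ IsMonoOn (stepUpColor N k φ) k Y) ∧
    2 ^ (ramseyNumber (k - 1) ((n - k + 4) / 2) - 1) < ramseyNumber k n := by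
  have hpart1 := part1 n k N hk hn φ hφ
  refine ⟨hpart1, ?_⟩
  rw [← hN]
  have hmem : ramseyNumber k n ∈ {M : ℕ | ∀ c : Finset ℕ → Bool,
      ∃ S ⊆ Finset.Icc 1 M, S.card = n ∧ IsMonoOn c k S} :=
    Nat.sInf_mem (ramsey_nonempty k n)
  by_contra hcon
  push_neg at hcon
  obtain ⟨S, hS, hScard, hSmono⟩ := hmem (stepUpColor N k φ)
  exact hpart1 S (subset_trans hS (Finset.Icc_subset_Icc le_rfl hcon)) hScard hSmono
end

section
/- There exists a positive constant c' (independent of k and m) such that D_3(m,k) ≥ 2^{c' m^2} for all m > 3 and all k ≥ 0. -/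
/-- The coloring `c` admits a monochromatic `(r,m,k)`-daisy inside `{1,…,N}`. -/
def HasMonoDaisy (r m k N : ℕ) (c : Finset ℕ → Bool) : Prop :=
  ∃ K M : Finset ℕ, K ∪ M ⊆ Finset.Icc 1 N ∧ Disjoint K M ∧
    K.card = k ∧ M.card = m ∧
    ∃ col : Bool, ∀ P ⊆ M, P.card = r → c (K ∪ P) = col

/-- `D_r(m,k)`: the daisy Ramsey number. -/
noncomputable def daisyRamsey (r m k : ℕ) : ℕ :=
  sInf {N : ℕ | ∀ c : Finset ℕ → Bool, HasMonoDaisy r m k N c}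

/-- The coloring `c` admits a monochromatic simple `(r,m,k)`-daisy inside `{1,…,N}`:
the kernel splits as `K₀ ∪ K₁` with `K₀ < M < K₁`. -/
def HasMonoSimpleDaisy (r m k N : ℕ) (c : Finset ℕ → Bool) : Prop :=
  ∃ K₀ M K₁ : Finset ℕ, K₀ ∪ M ∪ K₁ ⊆ Finset.Icc 1 N ∧
    (∀ x ∈ K₀, ∀ y ∈ M, x < y) ∧ (∀ y ∈ M, ∀ z ∈ K₁, y < z) ∧
    (∀ x ∈ K₀, ∀ z ∈ K₁, x < z) ∧
    (K₀ ∪ K₁).card = k ∧ M.card = m ∧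
    ∃ col : Bool, ∀ P ⊆ M, P.card = r → c (K₀ ∪ P ∪ K₁) = col

/-- `D_r^{smp}(m,k)`: the simple-daisy Ramsey number. -/
noncomputable def simpleDaisyRamsey (r m k : ℕ) : ℕ :=
  sInf {N : ℕ | ∀ c : Finset ℕ → Bool, HasMonoSimpleDaisy r m k N c}


section DaisyProof
open Finset
open scoped symmDiff



/-- Finite hypergraph Ramsey theorem, two colours, asymmetric version. -/
lemma ramsey_exists (r : ℕ) : ∀ s t : ℕ, ∃ N : ℕ, ∀ (c : Finset ℕ → Bool) (A : Finset ℕ),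
    N ≤ A.card →
    (∃ S ⊆ A, S.card = s ∧ ∀ P ⊆ S, P.card = r → c P = true) ∨
    (∃ S ⊆ A, S.card = t ∧ ∀ P ⊆ S, P.card = r → c P = false) := by
  induction r with
  | zero =>
    intro s t
    refine ⟨max s t, fun c A hA => ?_⟩
    cases hc : c ∅ with
    | true =>
      left
      obtain ⟨S, hS, hSc⟩ := Finset.exists_subset_card_eq (le_trans (le_max_left s t) hA)
      refine ⟨S, hS, hSc, fun P hP hPc => ?_⟩
      rw [card_eq_zero.mp hPc, hc]
    | false =>
      right
      obtain ⟨S, hS, hSc⟩ := Finset.exists_subset_card_eq (le_trans (le_max_right s t) hA)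
      refine ⟨S, hS, hSc, fun P hP hPc => ?_⟩
      rw [card_eq_zero.mp hPc, hc]
  | succ r ih =>
    suffices h : ∀ p s t, s + t ≤ p → ∃ N : ℕ, ∀ (c : Finset ℕ → Bool) (A : Finset ℕ),
        N ≤ A.card →
        (∃ S ⊆ A, S.card = s ∧ ∀ P ⊆ S, P.card = r + 1 → c P = true) ∨
        (∃ S ⊆ A, S.card = t ∧ ∀ P ⊆ S, P.card = r + 1 → c P = false) by
      intro s t; exact h (s + t) s t le_rfl
    intro p
    induction p with
    | zero =>
      intro s t hst
      refine ⟨0, fun c A _ => Or.inl ⟨∅, empty_subset A, ?_, fun P hP hPc => ?_⟩⟩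
      · simp; omega
      · exfalso
        have : P = ∅ := subset_empty.mp hP
        subst this; simp at hPc
    | succ p ihp =>
      intro s t hst
      rcases Nat.eq_zero_or_pos s with hs | hs
      · refine ⟨0, fun c A _ => Or.inl ⟨∅, empty_subset A, by simp [hs], fun P hP hPc => ?_⟩⟩
        exfalso
        have : P = ∅ := subset_empty.mp hP
        subst this; simp at hPc
      rcases Nat.eq_zero_or_pos t with ht | ht
      · refine ⟨0, fun c A _ => Or.inr ⟨∅, empty_subset A, by simp [ht], fun P hP hPc => ?_⟩⟩
        exfalso
        have : P = ∅ := subset_empty.mp hP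
        subst this; simp at hPc
      obtain ⟨N₁, hN₁⟩ := ihp (s - 1) t (by omega)
      obtain ⟨N₂, hN₂⟩ := ihp s (t - 1) (by omega)
      obtain ⟨N₀, hN₀⟩ := ih N₁ N₂
      refine ⟨N₀ + 1, fun c A hA => ?_⟩
      have hAne : A.Nonempty := card_pos.mp (by omega)
      obtain ⟨v, hv⟩ := hAne
      have hA' : N₀ ≤ (A.erase v).card := by
        rw [card_erase_of_mem hv]; omega
      rcases hN₀ (fun B => c (insert v B)) (A.erase v) hA' with
        ⟨T, hTA, hTc, hT⟩ | ⟨T, hTA, hTc, hT⟩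
      · rcases hN₁ c T (by omega) with ⟨U, hUT, hUc, hU⟩ | ⟨S, hST, hSc, hS⟩
        · left
          have hvU : v ∉ U := fun hvU => notMem_erase v A (hTA (hUT hvU))
          refine ⟨insert v U, ?_, ?_, ?_⟩
          · intro x hx
            rcases mem_insert.mp hx with rfl | hx
            · exact hv
            · exact mem_of_mem_erase (hTA (hUT hx))
          · rw [card_insert_of_notMem hvU, hUc]; omega
          · intro P hP hPc
            by_cases hvP : v ∈ P
            · have hPe : P.erase v ⊆ U := by
                intro x hx
                rcases mem_erase.mp hx with ⟨hxv, hxP⟩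
                rcases mem_insert.mp (hP hxP) with rfl | h
                · exact absurd rfl hxv
                · exact h
              have := hT (P.erase v) (hPe.trans hUT)
                (by rw [card_erase_of_mem hvP, hPc]; rfl)
              rwa [insert_erase hvP] at this
            · refine hU P (fun x hx => ?_) hPc
              rcases mem_insert.mp (hP hx) with rfl | h
              · exact absurd hx hvP
              · exact h
        · right
          exact ⟨S, hST.trans (hTA.trans (erase_subset v A)), hSc, hS⟩
      · rcases hN₂ c T (by omega) with ⟨S, hST, hSc, hS⟩ | ⟨U, hUT, hUc, hU⟩
        · left
          exact ⟨S, hST.trans (hTA.trans (erase_subset v A)), hSc, hS⟩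
        · right
          have hvU : v ∉ U := fun hvU => notMem_erase v A (hTA (hUT hvU))
          refine ⟨insert v U, ?_, ?_, ?_⟩
          · intro x hx
            rcases mem_insert.mp hx with rfl | hx
            · exact hv
            · exact mem_of_mem_erase (hTA (hUT hx))
          · rw [card_insert_of_notMem hvU, hUc]; omega
          · intro P hP hPc
            by_cases hvP : v ∈ P
            · have hPe : P.erase v ⊆ U := by
                intro x hx
                rcases mem_erase.mp hx with ⟨hxv, hxP⟩
                rcases mem_insert.mp (hP hxP) with rfl | h
                · exact absurd rfl hxv
                · exact h
              have := hT (P.erase v) (hPe.trans hUT)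
                (by rw [card_erase_of_mem hvP, hPc]; rfl)
              rwa [insert_erase hvP] at this
            · refine hU P (fun x hx => ?_) hPc
              rcases mem_insert.mp (hP hx) with rfl | h
              · exact absurd hx hvP
              · exact h


open scoped symmDiff
open Finset

abbrev Vec (n : ℕ) := Fin n → ZMod 2

lemma zmod2_add_self : ∀ a : ZMod 2, a + a = 0 := by decide

lemma vec_add_self {n : ℕ} (x : Vec n) : x + x = 0 := by
  funext i; exact zmod2_add_self (x i)

lemma vec_card (n : ℕ) : Fintype.card (Vec n) = 2 ^ n := by
  simp [Fintype.card_fun]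

lemma sum_symmDiff_eq {n : ℕ} (f : ℕ → Vec n) (P Q : Finset ℕ) :
    ∑ x ∈ (P ∆ Q), f x = ∑ x ∈ P, f x + ∑ x ∈ Q, f x := by
  have h1 : ∑ x ∈ P \ Q, f x + ∑ x ∈ P ∩ Q, f x = ∑ x ∈ P, f x := by
    rw [← Finset.sdiff_inter_self_left P Q]
    exact Finset.sum_sdiff inter_subset_left
  have h2 : ∑ x ∈ Q \ P, f x + ∑ x ∈ P ∩ Q, f x = ∑ x ∈ Q, f x := by
    rw [inter_comm, ← Finset.sdiff_inter_self_left Q P]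
    exact Finset.sum_sdiff inter_subset_left
  have hd : Disjoint (P \ Q) (Q \ P) := disjoint_sdiff_sdiff
  have hU : P ∆ Q = (P \ Q) ∪ (Q \ P) := by
    ext x; simp [Finset.mem_symmDiff, mem_union, mem_sdiff]
  rw [hU, Finset.sum_union hd, ← h1, ← h2]
  have := vec_add_self (∑ x ∈ P ∩ Q, f x)
  abel_nf
  rw [show (2:ℤ) • (∑ x ∈ P ∩ Q, f x) = ∑ x ∈ P ∩ Q, f x + ∑ x ∈ P ∩ Q, f x by
    rw [two_zsmul]
  ]
  rw [this, add_zero]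

/-- Greedy construction of a sequence with no small zero-sum subsets. -/
lemma exists_phi (N n : ℕ) (hN : 6 * (N + 1) ^ 5 < 2 ^ n) :
    ∃ φ : ℕ → Vec n, ∀ T ⊆ Finset.Icc 1 N, T.Nonempty → T.card ≤ 6 →
      ∑ t ∈ T, φ t ≠ 0 := by
  suffices h : ∀ j, j ≤ N → ∃ φ : ℕ → Vec n, ∀ T ⊆ Finset.Icc 1 j, T.Nonempty → T.card ≤ 6 →
      ∑ t ∈ T, φ t ≠ 0 from h N le_rfl
  intro j
  induction j with
  | zero =>
    intro _
    refine ⟨fun _ => 0, fun T hT hTne _ => absurd ?_ hTne.ne_empty⟩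
    have : T ⊆ ∅ := by simpa using hT
    exact subset_empty.mp this
  | succ j ihj =>
    intro hjN
    obtain ⟨φ, hφ⟩ := ihj (by omega)
    set F : Finset (Vec n) :=
      ((Finset.Icc 1 j).powerset.filter (fun T => T.card ≤ 5)).image
        (fun T => ∑ t ∈ T, φ t) with hF
    have hFcard : F.card < 2 ^ n := by
      have h1 : F.card ≤ ((Finset.Icc 1 j).powerset.filter (fun T => T.card ≤ 5)).card :=
        card_image_le
      have h2 : ((Finset.Icc 1 j).powerset.filter (fun T => T.card ≤ 5)) ⊆
          (Finset.range 6).biUnion (fun i => (Finset.Icc 1 j).powersetCard i) := by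
        intro T hT
        rw [mem_filter, mem_powerset] at hT
        exact mem_biUnion.mpr ⟨T.card, mem_range.mpr (by omega),
          mem_powersetCard.mpr ⟨hT.1, rfl⟩⟩
      have h3 : ((Finset.range 6).biUnion (fun i => (Finset.Icc 1 j).powersetCard i)).card
          ≤ 6 * (N + 1) ^ 5 := by
        refine card_biUnion_le.trans ?_
        have : ∀ i ∈ Finset.range 6, ((Finset.Icc 1 j).powersetCard i).card ≤ (N + 1) ^ 5 := by
          intro i hi
          rw [card_powersetCard, Nat.card_Icc]
          calc (j + 1 - 1).choose i ≤ (j + 1 - 1) ^ i := Nat.choose_le_pow _ _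
            _ ≤ (N + 1) ^ i := Nat.pow_le_pow_left (by omega) i
            _ ≤ (N + 1) ^ 5 := Nat.pow_le_pow_right (by omega) (by simpa using mem_range.mp hi |> Nat.lt_succ_iff.mp |> le_trans (le_refl _))
        calc ∑ i ∈ Finset.range 6, ((Finset.Icc 1 j).powersetCard i).card
            ≤ (Finset.range 6).card * (N + 1) ^ 5 := by
              simpa using Finset.sum_le_card_nsmul _ _ _ this
          _ = 6 * (N + 1) ^ 5 := by simp
      exact lt_of_le_of_lt (h1.trans ((card_le_card h2).trans h3)) hN
    have hv : ∃ v : Vec n, v ∉ F := by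
      by_contra hcon
      push_neg at hcon
      have : F = Finset.univ := eq_univ_iff_forall.mpr hcon
      rw [this, card_univ, vec_card] at hFcard
      omega
    obtain ⟨v, hv⟩ := hv
    refine ⟨Function.update φ (j + 1) v, fun T hT hTne hTc => ?_⟩
    by_cases hjT : j + 1 ∈ T
    · have hT' : T.erase (j + 1) ⊆ Finset.Icc 1 j := by
        intro x hx
        rcases mem_erase.mp hx with ⟨hxj, hxT⟩
        have := mem_Icc.mp (hT hxT)
        exact mem_Icc.mpr (by omega)
      have hsum : ∑ t ∈ T, Function.update φ (j + 1) v t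
          = v + ∑ t ∈ T.erase (j + 1), φ t := by
        rw [← Finset.add_sum_erase _ _ hjT, Function.update_self]
        congr 1
        refine Finset.sum_congr rfl (fun x hx => ?_)
        exact Function.update_of_ne (mem_erase.mp hx).1 _ _
      intro h0
      rw [hsum] at h0
      have hveq : v = ∑ t ∈ T.erase (j + 1), φ t := by
        have := eq_neg_of_add_eq_zero_left h0
        rwa [neg_eq_of_add_eq_zero_left (vec_add_self _)] at this
      apply hv
      rw [hF]
      exact mem_image.mpr ⟨T.erase (j + 1),
        mem_filter.mpr ⟨mem_powerset.mpr hT', by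
          rw [card_erase_of_mem hjT]; omega⟩, hveq.symm⟩
    · have hT' : T ⊆ Finset.Icc 1 j := by
        intro x hx
        have := mem_Icc.mp (hT hx)
        have hxj : x ≠ j + 1 := by rintro rfl; exact hjT hx
        exact mem_Icc.mpr (by omega)
      have hsum : ∑ t ∈ T, Function.update φ (j + 1) v t = ∑ t ∈ T, φ t := by
        refine Finset.sum_congr rfl (fun x hx => ?_)
        exact Function.update_of_ne (by rintro rfl; exact hjT hx) _ _
      rw [hsum]
      exact hφ T hT' hTne hTc

lemma triple_sums_distinct {n N : ℕ} (φ : ℕ → Vec n)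
    (hφ : ∀ T ⊆ Finset.Icc 1 N, T.Nonempty → T.card ≤ 6 → ∑ t ∈ T, φ t ≠ 0) :
    ∀ P Q : Finset ℕ, P ⊆ Finset.Icc 1 N → Q ⊆ Finset.Icc 1 N → P.card = 3 → Q.card = 3 →
      (∑ p ∈ P, φ p) = ∑ q ∈ Q, φ q → P = Q := by
  intro P Q hP hQ hPc hQc hsum
  by_contra hne
  have hTne : (P ∆ Q).Nonempty := by
    rw [nonempty_iff_ne_empty]
    simpa using hne
  have hTsub : P ∆ Q ⊆ Finset.Icc 1 N := by
    intro x hx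
    rcases Finset.mem_symmDiff.mp hx with ⟨h, _⟩ | ⟨h, _⟩
    · exact hP h
    · exact hQ h
  have hTc : (P ∆ Q).card ≤ 6 := by
    have h1 : P ∆ Q ⊆ P ∪ Q := by
      intro x hx
      rcases Finset.mem_symmDiff.mp hx with ⟨h, _⟩ | ⟨h, _⟩
      · exact mem_union_left _ h
      · exact mem_union_right _ h
    calc (P ∆ Q).card ≤ (P ∪ Q).card := card_le_card h1
      _ ≤ P.card + Q.card := card_union_le _ _
      _ ≤ 6 := by omega
  apply hφ _ hTsub hTne hTc
  rw [sum_symmDiff_eq, hsum, vec_add_self]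



lemma card_filter_const {n : ℕ} (W : Finset (Vec n)) (col : Bool) :
    (Finset.univ.filter (fun g : Vec n → Bool => ∀ w ∈ W, g w = col)).card
      ≤ 2 ^ (2 ^ n - W.card) := by
  classical
  have hle : (Finset.univ.filter (fun g : Vec n → Bool => ∀ w ∈ W, g w = col)).card
      ≤ (Finset.univ : Finset ({x : Vec n // x ∈ Wᶜ} → Bool)).card := by
    apply Finset.card_le_card_of_injOn (fun g => (fun x : {x : Vec n // x ∈ Wᶜ} => g x.1))
      (fun _ _ => mem_univ _)
    intro g₁ hg₁ g₂ hg₂ h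
    simp only [coe_filter, Set.mem_setOf_eq] at hg₁ hg₂
    funext v
    by_cases hv : v ∈ W
    · rw [hg₁.2 v hv, hg₂.2 v hv]
    · exact congrFun h ⟨v, by simpa using hv⟩
  calc _ ≤ _ := hle
    _ = 2 ^ (Wᶜ.card) := by
        rw [card_univ, Fintype.card_fun, Fintype.card_coe, Fintype.card_bool]
    _ = 2 ^ (2 ^ n - W.card) := by rw [card_compl, vec_card]

lemma exists_good_g {n N m : ℕ} (φ : ℕ → Vec n)
    (hφ : ∀ P Q : Finset ℕ, P ⊆ Finset.Icc 1 N → Q ⊆ Finset.Icc 1 N →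
      P.card = 3 → Q.card = 3 → (∑ p ∈ P, φ p) = ∑ q ∈ Q, φ q → P = Q)
    (h1 : Nat.choose m 3 ≤ 2 ^ n)
    (h2 : 2 ^ (n + 1) * Nat.choose N m < 2 ^ Nat.choose m 3) :
    ∃ g : Vec n → Bool, ∀ (s : Vec n) (M : Finset ℕ) (col : Bool),
      M ⊆ Finset.Icc 1 N → M.card = m →
      ¬ ∀ P ∈ M.powersetCard 3, g (s + ∑ p ∈ P, φ p) = col := by
  classical
  by_contra hcon
  push_neg at hcon
  set T : Finset ((Vec n) × Finset ℕ × Bool) :=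
    Finset.univ ×ˢ ((Finset.Icc 1 N).powersetCard m) ×ˢ Finset.univ with hTdef
  set E : (Vec n) × Finset ℕ × Bool → Finset (Vec n → Bool) :=
    fun x => Finset.univ.filter
      (fun g => ∀ P ∈ x.2.1.powersetCard 3, g (x.1 + ∑ p ∈ P, φ p) = x.2.2) with hEdef
  have hsub : (Finset.univ : Finset (Vec n → Bool)) ⊆ T.biUnion E := by
    intro g _
    obtain ⟨s, M, col, hM, hMc, hg⟩ := hcon g
    refine mem_biUnion.mpr ⟨(s, M, col), ?_, mem_filter.mpr ⟨mem_univ _, hg⟩⟩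
    rw [hTdef, mem_product]
    refine ⟨mem_univ _, ?_⟩
    rw [mem_product]
    exact ⟨mem_powersetCard.mpr ⟨hM, hMc⟩, mem_univ _⟩
  have hE : ∀ x ∈ T, (E x).card ≤ 2 ^ (2 ^ n - Nat.choose m 3) := by
    rintro ⟨s, M, col⟩ hx
    rw [hTdef, mem_product] at hx
    obtain ⟨-, hx⟩ := hx
    rw [mem_product] at hx
    obtain ⟨hMsub, hMcard⟩ := mem_powersetCard.mp hx.1
    set W : Finset (Vec n) := (M.powersetCard 3).image (fun P => s + ∑ p ∈ P, φ p) with hWdef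
    have hWcard : W.card = Nat.choose m 3 := by
      rw [hWdef, card_image_of_injOn, card_powersetCard, hMcard]
      intro P hP Q hQ h
      rw [mem_coe, mem_powersetCard] at hP hQ
      exact hφ P Q (hP.1.trans hMsub) (hQ.1.trans hMsub) hP.2 hQ.2 (add_left_cancel h)
    have hEW : E (s, M, col) ⊆
        Finset.univ.filter (fun g : Vec n → Bool => ∀ w ∈ W, g w = col) := by
      intro g hg
      refine mem_filter.mpr ⟨mem_univ _, fun w hw => ?_⟩
      obtain ⟨P, hP, rfl⟩ := mem_image.mp hw
      exact (mem_filter.mp hg).2 P hP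
    calc (E (s, M, col)).card ≤ _ := card_le_card hEW
      _ ≤ 2 ^ (2 ^ n - W.card) := card_filter_const W col
      _ = 2 ^ (2 ^ n - Nat.choose m 3) := by rw [hWcard]
  have hbig : 2 ^ 2 ^ n ≤ T.card * 2 ^ (2 ^ n - Nat.choose m 3) := by
    calc 2 ^ 2 ^ n = (Finset.univ : Finset (Vec n → Bool)).card := by
          rw [card_univ, Fintype.card_fun, vec_card, Fintype.card_bool]
      _ ≤ (T.biUnion E).card := card_le_card hsub
      _ ≤ ∑ x ∈ T, (E x).card := card_biUnion_le
      _ ≤ T.card * 2 ^ (2 ^ n - Nat.choose m 3) := by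
          simpa using Finset.sum_le_card_nsmul _ _ _ hE
  have hTcard : T.card = 2 ^ n * (Nat.choose N m * 2) := by
    rw [hTdef, card_product, card_product, card_univ, vec_card, card_powersetCard,
      Nat.card_Icc, card_univ, Fintype.card_bool]
    simp
  rw [hTcard] at hbig
  have hsplit : 2 ^ 2 ^ n = 2 ^ Nat.choose m 3 * 2 ^ (2 ^ n - Nat.choose m 3) := by
    rw [← pow_add]; congr 1; omega
  rw [hsplit] at hbig
  have hpos : 0 < 2 ^ (2 ^ n - Nat.choose m 3) := Nat.pow_pos (by omega)
  have := Nat.le_of_mul_le_mul_right hbig hpos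
  have heq : 2 ^ n * (Nat.choose N m * 2) = 2 ^ (n + 1) * Nat.choose N m := by ring
  omega


lemma daisy_mono {m k N N' : ℕ} (h : N ≤ N') (c : Finset ℕ → Bool) :
    HasMonoDaisy 3 m k N c → HasMonoDaisy 3 m k N' c := by
  rintro ⟨K, M, hsub, hd, hK, hM, col, hcol⟩
  exact ⟨K, M, hsub.trans (Finset.Icc_subset_Icc_right h), hd, hK, hM, col, hcol⟩

lemma no_daisy (m k : ℕ) (hm : 18 ≤ m) :
    ∃ c : Finset ℕ → Bool, ¬ HasMonoDaisy 3 m k (2 ^ (m ^ 2 / 12)) c := by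
  set E := m ^ 2 / 12 with hE
  set N := 2 ^ E with hNdef
  have h12 : E * 12 ≤ m ^ 2 := Nat.div_mul_le_self _ _
  have hm2 : 324 ≤ m ^ 2 := by nlinarith
  have hA : 6 * (N + 1) ^ 5 < 2 ^ (m ^ 2) := by
    have hpow : N + 1 ≤ 2 ^ (E + 1) := by
      have h1 : (1:ℕ) ≤ 2 ^ E := Nat.one_le_two_pow
      rw [pow_succ]; omega
    have key : (N + 1) ^ 5 ≤ 2 ^ (5 * E + 5) := by
      calc (N + 1) ^ 5 ≤ (2 ^ (E + 1)) ^ 5 := Nat.pow_le_pow_left hpow 5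
        _ = 2 ^ ((E + 1) * 5) := (pow_mul 2 (E + 1) 5).symm
        _ = 2 ^ (5 * E + 5) := by ring_nf
    have h58 : 5 * E + 8 ≤ m ^ 2 := by omega
    calc 6 * (N + 1) ^ 5 ≤ 6 * 2 ^ (5 * E + 5) := Nat.mul_le_mul_left 6 key
      _ < 8 * 2 ^ (5 * E + 5) := by
          have h0 : (0:ℕ) < 2 ^ (5 * E + 5) := Nat.pow_pos (by norm_num)
          omega
      _ = 2 ^ (5 * E + 8) := by
          rw [show 5 * E + 8 = (5 * E + 5) + 3 by omega, pow_add]; ring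
      _ ≤ 2 ^ (m ^ 2) := Nat.pow_le_pow_right (by norm_num) h58
  have hB : Nat.choose m 3 ≤ 2 ^ (m ^ 2) := by
    calc Nat.choose m 3 ≤ m ^ 3 := Nat.choose_le_pow _ _
      _ ≤ (2 ^ m) ^ 3 := Nat.pow_le_pow_left (Nat.lt_two_pow_self (n := m)).le 3
      _ = 2 ^ (m * 3) := (pow_mul 2 m 3).symm
      _ ≤ 2 ^ (m ^ 2) := Nat.pow_le_pow_right (by norm_num) (by nlinarith)
  have hdesc : Nat.choose m 3 * 6 = m * (m - 1) * (m - 2) := by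
    have h := Nat.descFactorial_eq_factorial_mul_choose m 3
    have h2 : m.descFactorial 3 = (m - 2) * ((m - 1) * m) := by
      simp [Nat.descFactorial_succ, Nat.descFactorial_zero]
    have h3 : Nat.factorial 3 = 6 := by decide
    rw [h2, h3] at h
    calc Nat.choose m 3 * 6 = 6 * Nat.choose m 3 := by ring
      _ = (m - 2) * ((m - 1) * m) := h.symm
      _ = m * (m - 1) * (m - 2) := by ring
  have hkey : m ^ 2 + 1 + E * m < Nat.choose m 3 := by
    have hEm : E * m * 12 ≤ m ^ 2 * m := by
      calc E * m * 12 = E * 12 * m := by ring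
        _ ≤ m ^ 2 * m := Nat.mul_le_mul_right m h12
    obtain ⟨a, rfl⟩ : ∃ a, m = a + 18 := ⟨m - 18, by omega⟩
    have e1 : a + 18 - 1 = a + 17 := by omega
    have e2 : a + 18 - 2 = a + 16 := by omega
    rw [e1, e2] at hdesc
    nlinarith [hdesc, hEm]
  have hC : 2 ^ (m ^ 2 + 1) * Nat.choose N m < 2 ^ Nat.choose m 3 := by
    have hc1 : Nat.choose N m ≤ 2 ^ (E * m) := by
      calc Nat.choose N m ≤ N ^ m := Nat.choose_le_pow _ _
        _ = 2 ^ (E * m) := by rw [hNdef, ← pow_mul]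
    calc 2 ^ (m ^ 2 + 1) * Nat.choose N m ≤ 2 ^ (m ^ 2 + 1) * 2 ^ (E * m) :=
          Nat.mul_le_mul_left _ hc1
      _ = 2 ^ (m ^ 2 + 1 + E * m) := (pow_add 2 _ _).symm
      _ < 2 ^ Nat.choose m 3 := Nat.pow_lt_pow_right (by norm_num) (by omega)
  obtain ⟨φ, hφ0⟩ := exists_phi N (m ^ 2) hA
  have hφ := triple_sums_distinct φ hφ0
  obtain ⟨g, hg⟩ := exists_good_g φ hφ hB hC
  refine ⟨fun A => g (∑ a ∈ A, φ a), ?_⟩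
  rintro ⟨K, M, hsub, hdisj, hK, hM, col, hcol⟩
  refine hg (∑ a ∈ K, φ a) M col (Finset.union_subset_iff.mp hsub).2 hM (fun P hP => ?_)
  obtain ⟨hPM, hP3⟩ := Finset.mem_powersetCard.mp hP
  have hdKP : Disjoint K P := hdisj.mono_right hPM
  have h := hcol P hPM hP3
  rw [← Finset.sum_union hdKP]
  exact h

lemma daisy_set_nonempty (m k : ℕ) :
    ∃ N, ∀ c : Finset ℕ → Bool, HasMonoDaisy 3 m k N c := by
  obtain ⟨Nr, hNr⟩ := ramsey_exists 3 m m
  refine ⟨Nr + k, fun c => ?_⟩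
  have hA : Nr ≤ (Finset.Icc 1 Nr).card := by rw [Nat.card_Icc]; omega
  have hKcard : (Finset.Icc (Nr + 1) (Nr + k)).card = k := by rw [Nat.card_Icc]; omega
  rcases hNr (fun P => c (Finset.Icc (Nr + 1) (Nr + k) ∪ P)) (Finset.Icc 1 Nr) hA with
    ⟨S, hS, hSc, hmono⟩ | ⟨S, hS, hSc, hmono⟩ <;>
  · refine ⟨Finset.Icc (Nr + 1) (Nr + k), S, ?_, ?_, hKcard, hSc, _,
      fun P hP h3 => hmono P hP h3⟩
    · rw [Finset.union_subset_iff]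
      constructor
      · intro x hx; have := Finset.mem_Icc.mp hx; exact Finset.mem_Icc.mpr (by omega)
      · intro x hx; have := Finset.mem_Icc.mp (hS hx); exact Finset.mem_Icc.mpr (by omega)
    · rw [Finset.disjoint_left]
      intro x hx hx2
      have h1 := Finset.mem_Icc.mp hx
      have h2 := Finset.mem_Icc.mp (hS hx2)
      omega

/-- There is a constant `c' > 0`, independent of `k` and `m`, such that
`D_3(m,k) ≥ 2^(c' m²)` for all `m > 3` and all `k ≥ 0`. -/
theorem daisyRamsey_three_lower : ∃ c' : ℝ, 0 < c' ∧
    ∀ m k : ℕ, 3 < m → (2 : ℝ) ^ (c' * (m : ℝ) ^ 2) ≤ (daisyRamsey 3 m k : ℝ) := by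
  refine ⟨1 / 289, by norm_num, fun m k hm => ?_⟩
  have hne : {N : ℕ | ∀ c : Finset ℕ → Bool, HasMonoDaisy 3 m k N c}.Nonempty :=
    daisy_set_nonempty m k
  have hmem : ∀ c, HasMonoDaisy 3 m k (daisyRamsey 3 m k) c := Nat.sInf_mem hne
  set D := daisyRamsey 3 m k with hDdef
  have hDm : m ≤ D := by
    obtain ⟨K, M, hsub, hdisj, hK, hM, -⟩ := hmem (fun _ => true)
    calc m = M.card := hM.symm
      _ ≤ (K ∪ M).card := Finset.card_le_card Finset.subset_union_right
      _ ≤ (Finset.Icc 1 D).card := Finset.card_le_card hsub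
      _ = D := by rw [Nat.card_Icc]; omega
  by_cases hm18 : 18 ≤ m
  · have hD2 : 2 ^ (m ^ 2 / 12) < D := by
      by_contra hle
      push_neg at hle
      obtain ⟨c, hc⟩ := no_daisy m k hm18
      exact hc (daisy_mono hle c (hmem c))
    have hnat : m ^ 2 ≤ (m ^ 2 / 12) * 289 := by
      have h1 := Nat.div_add_mod (m ^ 2) 12
      have h2 : m ^ 2 % 12 < 12 := Nat.mod_lt _ (by norm_num)
      have h3 : 324 ≤ m ^ 2 := by nlinarith
      omega
    have hexp : (1 / 289 : ℝ) * (m : ℝ) ^ 2 ≤ ((m ^ 2 / 12 : ℕ) : ℝ) := by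
      rw [div_mul_eq_mul_div, one_mul, div_le_iff₀ (by norm_num : (0:ℝ) < 289)]
      have hc : ((m : ℝ) ^ 2) = ((m ^ 2 : ℕ) : ℝ) := by push_cast; ring
      rw [hc]
      exact_mod_cast hnat
    calc (2 : ℝ) ^ ((1 / 289) * (m : ℝ) ^ 2)
        ≤ (2 : ℝ) ^ (((m ^ 2 / 12 : ℕ) : ℝ)) :=
          Real.rpow_le_rpow_of_exponent_le one_le_two hexp
      _ = ((2 ^ (m ^ 2 / 12) : ℕ) : ℝ) := by
          rw [Real.rpow_natCast]; push_cast; ring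
      _ ≤ (D : ℝ) := by exact_mod_cast hD2.le
  · have hm17 : m ≤ 17 := by omega
    have hmr : (m : ℝ) ≤ 17 := by exact_mod_cast hm17
    have h1 : (1 / 289 : ℝ) * (m : ℝ) ^ 2 ≤ 1 := by nlinarith [Nat.cast_nonneg (α := ℝ) m]
    calc (2 : ℝ) ^ ((1 / 289) * (m : ℝ) ^ 2) ≤ (2 : ℝ) ^ (1 : ℝ) :=
          Real.rpow_le_rpow_of_exponent_le one_le_two h1
      _ = 2 := Real.rpow_one 2
      _ ≤ (m : ℝ) := by exact_mod_cast (by omega : 2 ≤ m)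
      _ ≤ (D : ℝ) := by exact_mod_cast hDm

end DaisyProof
end
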